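/- In P_{n+1}, for all 1 ≤ i < j < k ≤ n and all α ∈ ℤ, the following three pairs of elements commute: (1) u_{ij}(N,−α)^{−1} X_{0i} commutes with x_{jk}(α); (2) u_{ik}(α,−N) X_{0k} commutes with x_{ij}(α); (3) u_{ij}(α+1,−N) X_{0j} commutes with x_{ik}(α). -/

import Mathlib

/-- The braid relations on `n` generators `σ_0, …, σ_{n−1}`:
`σ_i σ_j = σ_j σ_i` for `|i−j| ≥ 2` and `σ_i σ_{i+1} σ_i = σ_{i+1} σ_i σ_{i+1}`. -/
def braidRels (n : ℕ) : Set (FreeGroup (Fin n)) :=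
  { r | (∃ i j : Fin n, (i : ℕ) + 2 ≤ (j : ℕ) ∧
          r = FreeGroup.of i * FreeGroup.of j * (FreeGroup.of i)⁻¹ * (FreeGroup.of j)⁻¹) ∨
        (∃ i j : Fin n, (i : ℕ) + 1 = (j : ℕ) ∧
          r = FreeGroup.of i * FreeGroup.of j * FreeGroup.of i *
              (FreeGroup.of j * FreeGroup.of i * FreeGroup.of j)⁻¹) }

/-- The braid group `B_{n+1}` on `n+1` strands, presented by `n` generators
`σ_0, …, σ_{n−1}` and the braid relations. -/
abbrev Braid (n : ℕ) := PresentedGroup (braidRels n)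

/-- The generator `σ_k` of `B_{n+1}` (junk value `1` if `k ≥ n`). -/
def gen (n k : ℕ) : Braid n :=
  if h : k < n then PresentedGroup.of (⟨k, h⟩ : Fin n) else 1

/-- The product `σ_{j−1} σ_{j−2} ⋯ σ_{i+1}`. -/
def chain (n i j : ℕ) : Braid n :=
  ((List.range (j - 1 - i)).map (fun k => gen n (j - 1 - k))).prod

/-- The Artin generator `x_{ij} = (σ_{j−1}⋯σ_{i+1}) σ_i² (σ_{j−1}⋯σ_{i+1})⁻¹`
of the pure braid group `P_{n+1}`. -/
def artin (n i j : ℕ) : Braid n :=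
  chain n i j * (gen n i) ^ 2 * (chain n i j)⁻¹

/-- For `β ≥ 0`, `pik x α β = x(α) x(α+1) ⋯ x(α+β−1)` (empty product being `1`);
for `β < 0`, `pik x α β = x(α−1)⁻¹ x(α−2)⁻¹ ⋯ x(α+β)⁻¹`. -/
def pik {G : Type*} [Group G] (x : ℤ → G) (α β : ℤ) : G :=
  if 0 ≤ β then ((List.range β.toNat).map (fun k => x (α + k))).prod
  else (((List.range (-β).toNat).map (fun k => x (α + β + k))).prod)⁻¹

/-- `u(α,β) = π(α,β) · π(0,β)⁻¹`. -/
def uu {G : Type*} [Group G] (x : ℤ → G) (α β : ℤ) : G :=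
  pik x α β * (pik x 0 β)⁻¹

/-- `x_{ij}(α) = x_{0i}^α x_{ij} x_{0i}^{−α}`. -/
def xg (n i j : ℕ) (α : ℤ) : Braid n :=
  artin n 0 i ^ α * artin n i j * artin n 0 i ^ (-α)

/-- `x_{ij}(α+β|α) = π_{ij}(α,β) · x_{ij}(α+β) · π_{ij}(α,β)⁻¹`. -/
def xconj (n i j : ℕ) (α β : ℤ) : Braid n :=
  pik (xg n i j) α β * xg n i j (α + β) * (pik (xg n i j) α β)⁻¹

/-- `X_{0i} = x_{0i}^N`. -/
def XX (n N i : ℕ) : Braid n := artin n 0 i ^ N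

/-! Write `A = x₀ᵢ`, `B = x₀ⱼ`, `C = xᵢⱼ`. The family `xᵢⱼ(a) = Aᵃ C A⁻ᵃ` telescopes:
`π(α, β) = A^α (CA)^β A^(-α-β)`. The pure braid relation `ABC = BCA = CAB` makes `z = ABC`
commute with `A` and `B`, and gives `CA = B⁻¹ z`; hence `u(α, β) = A^α B^(-β) A^(-α) B^β`.
Each of the three elements is then a conjugate, by a power of `A` or `B`, of a power of an Artin
generator, and the claims reduce to the classical relations: `x₀ᵢ` commutes with `xⱼₖ`, `x₀ₖ` with
`xᵢⱼ`, and `x₀ᵢ x₀ⱼ x₀ᵢ⁻¹` with `xᵢₖ`. Those relations hold for consecutive indices by the braid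
relations, and conjugation by the `σₜ` moves the indices apart one step at a time. -/

section Group

variable {G : Type*} [Group G]

def CyclicProd (X Y Z : G) : Prop :=
  X * Y * Z = Y * Z * X ∧ X * Y * Z = Z * X * Y

theorem CyclicProd.map {H F : Type*} [Group H] [FunLike F G H] [MonoidHomClass F G H]
    {X Y Z : G} (h : CyclicProd X Y Z) (f : F) : CyclicProd (f X) (f Y) (f Z) := by
  simp only [CyclicProd, ← map_mul]
  exact ⟨congrArg f h.1, congrArg f h.2⟩

theorem CyclicProd.commute_left {X Y Z : G} (h : CyclicProd X Y Z) : Commute (X * Y * Z) X :=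
  calc X * Y * Z * X = X * (Y * Z * X) := by group
    _ = X * (X * Y * Z) := by rw [← h.1]

theorem CyclicProd.commute_mid {X Y Z : G} (h : CyclicProd X Y Z) : Commute (X * Y * Z) Y :=
  calc X * Y * Z * Y = Y * (Z * X * Y) := by rw [h.1]; group
    _ = Y * (X * Y * Z) := by rw [← h.2]

theorem Commute.zpow_conj {a b : G} (h : Commute a b) (g : G) (k : ℤ) :
    Commute (g ^ k * a * g ^ (-k)) (g ^ k * b * g ^ (-k)) := by
  simpa only [zpow_neg] using h.conj (g ^ k)

section BraidRelation

variable {s t : G}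

theorem mul_sq_mul_inv_of_braid (h : s * t * s = t * s * t) :
    t * (s * s) * t⁻¹ = s⁻¹ * (t * t) * s :=
  calc t * (s * s) * t⁻¹ = s⁻¹ * (s * t * s) * s * t⁻¹ := by group
    _ = s⁻¹ * (t * s * t) * s * t⁻¹ := by rw [h]
    _ = s⁻¹ * t * (s * t * s) * t⁻¹ := by group
    _ = s⁻¹ * t * (t * s * t) * t⁻¹ := by rw [h]
    _ = s⁻¹ * (t * t) * s := by group

theorem sq_mul_sq_mul_inv_of_braid (h : s * t * s = t * s * t) :
    s * s * (t * (s * s) * t⁻¹) * (s * s)⁻¹ = t⁻¹ * (s * s) * t :=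
  calc s * s * (t * (s * s) * t⁻¹) * (s * s)⁻¹ = s * (t * t) * s⁻¹ := by
        rw [mul_sq_mul_inv_of_braid h]; group
    _ = t⁻¹ * (s * s) * t := mul_sq_mul_inv_of_braid h.symm

theorem cyclicProd_of_braid (h : s * t * s = t * s * t) :
    CyclicProd (s * s) (t * (s * s) * t⁻¹) (t * t) := by
  have hsq : s * s * t * s * s = s * t * s * t * s :=
    calc s * s * t * s * s = s * (s * t * s) * s := by group
      _ = s * (t * s * t) * s := by rw [h]
      _ = s * t * s * t * s := by group
  have hcube : s * t * s * t * s * t = t * s * t * s * t * s :=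
    calc s * t * s * t * s * t = (s * t * s) * (t * s * t) := by group
      _ = (t * s * t) * (s * t * s) := by rw [h]
      _ = t * s * t * s * t * s := by group
  have hXYZ : s * s * (t * (s * s) * t⁻¹) * (t * t) = s * t * s * t * s * t :=
    calc _ = s * s * t * s * s * t := by group
      _ = _ := by rw [hsq]
  have hYZX : t * (s * s) * t⁻¹ * (t * t) * (s * s) = s * t * s * t * s * t :=
    calc _ = t * (s * s * t * s * s) := by group
      _ = _ := by rw [hsq, hcube]; group
  have hZXY : t * t * (s * s) * (t * (s * s) * t⁻¹) = s * t * s * t * s * t :=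
    calc _ = t * (t * (s * s * t * s * s)) * t⁻¹ := by group
      _ = t * (t * s * t * s * t * s) * t⁻¹ := by rw [hsq]; group
      _ = t * (s * t * s * t * s * t) * t⁻¹ := by rw [hcube]
      _ = t * s * t * s * t * s := by group
      _ = _ := hcube.symm
  exact ⟨hXYZ.trans hYZX.symm, hXYZ.trans hZXY.symm⟩

end BraidRelation

theorem list_prod_map_range_conj (A C : G) (α : ℤ) (m : ℕ) :
    ((List.range m).map fun k : ℕ => A ^ (α + k) * C * A ^ (-(α + k))).prod
      = A ^ α * (C * A) ^ (m : ℤ) * A ^ (-(α + m)) := by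
  induction m with
  | zero => simp
  | succ m ih =>
    rw [List.range_succ, List.map_append, List.prod_append, ih]
    simp only [List.map_cons, List.map_nil, List.prod_cons, List.prod_nil, mul_one]
    push_cast
    rw [zpow_add_one]
    group

theorem pik_conj (A C : G) (α β : ℤ) :
    pik (fun a => A ^ a * C * A ^ (-a)) α β = A ^ α * (C * A) ^ β * A ^ (-(α + β)) := by
  -- `pik` runs over `List.range`, coerced to a list of integers through the list monad.
  simp only [pik, List.pure_def, List.bind_eq_flatMap, ← List.map_eq_flatMap, List.map_map,
    Function.comp_def, list_prod_map_range_conj]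
  split_ifs with hβ
  · rw [Int.toNat_of_nonneg hβ]
  · rw [Int.toNat_of_nonneg (by omega)]
    group

theorem uu_conj (A C : G) (α β : ℤ) :
    uu (fun a => A ^ a * C * A ^ (-a)) α β
      = A ^ α * (C * A) ^ β * A ^ (-α) * (C * A) ^ (-β) := by
  rw [uu, pik_conj, pik_conj]
  group

variable {A B C : G} {x : ℤ → G}

theorem CyclicProd.uu_eq (h : CyclicProd A B C) (hx : x = fun a => A ^ a * C * A ^ (-a))
    (α β : ℤ) :
    uu x α β = A ^ α * B ^ (-β) * A ^ (-α) * B ^ β := by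
  have hCA : C * A = B⁻¹ * (A * B * C) := by rw [h.1]; group
  have hzB : Commute B⁻¹ (A * B * C) := h.commute_mid.symm.inv_left
  set z := A * B * C
  have hzA : Commute (z ^ β) (A ^ (-α) * B ^ β) :=
    (h.commute_left.zpow_zpow β (-α)).mul_right (h.commute_mid.zpow_zpow β β)
  calc uu x α β = A ^ α * B ^ (-β) * (z ^ β * (A ^ (-α) * B ^ β)) * z ^ (-β) := by
        rw [hx, uu_conj, hCA, hzB.mul_zpow, hzB.mul_zpow]; group
    _ = A ^ α * B ^ (-β) * A ^ (-α) * B ^ β := by rw [hzA.eq]; group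

theorem CyclicProd.uu_inv_mul_pow (h : CyclicProd A B C)
    (hx : x = fun a => A ^ a * C * A ^ (-a)) (N : ℕ) (α : ℤ) :
    (uu x N (-α))⁻¹ * A ^ N = B ^ α * A ^ N * B ^ (-α) := by
  rw [h.uu_eq hx]
  group

theorem CyclicProd.uu_mul_pow (h : CyclicProd A B C)
    (hx : x = fun a => A ^ a * C * A ^ (-a)) (α : ℤ) (N : ℕ) :
    uu x α (-N) * B ^ N = A ^ α * B ^ N * A ^ (-α) := by
  rw [h.uu_eq hx]
  group

end Group

section Artin

variable {n : ℕ}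

theorem gen_commute {a b : ℕ} (h : a + 2 ≤ b) : Commute (gen n a) (gen n b) := by
  by_cases hb : b < n
  · have ha : a < n := by omega
    have hrel := PresentedGroup.one_of_mem (rels := braidRels n)
      (Or.inl ⟨⟨a, ha⟩, ⟨b, hb⟩, h, rfl⟩)
    simp only [map_mul, map_inv] at hrel
    simp only [gen, dif_pos ha, dif_pos hb]
    exact commutatorElement_eq_one_iff_commute.mp hrel
  · simp only [gen, dif_neg hb]
    exact Commute.one_right _

theorem gen_braid {a : ℕ} (h : a + 2 ≤ n) :
    gen n a * gen n (a + 1) * gen n a = gen n (a + 1) * gen n a * gen n (a + 1) := by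
  have ha : a < n := by omega
  have hb : a + 1 < n := by omega
  simp only [gen, dif_pos ha, dif_pos hb]
  exact PresentedGroup.mk_eq_mk_of_mul_inv_mem (Or.inr ⟨⟨a, ha⟩, ⟨a + 1, hb⟩, rfl, rfl⟩)

theorem artin_succ_self (i : ℕ) : artin n i (i + 1) = gen n i * gen n i := by
  simp [artin, chain, sq]

theorem artin_succ_right {i j : ℕ} (h : i < j) :
    artin n i (j + 1) = gen n j * artin n i j * (gen n j)⁻¹ := by
  have hchain : chain n i (j + 1) = gen n j * chain n i j := by
    rw [chain, chain, show j + 1 - 1 - i = j - 1 - i + 1 by omega, List.range_succ_eq_map,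
      List.map_cons, List.prod_cons, List.map_map]
    congr 3
    funext k
    simp only [Function.comp_apply]
    congr 1
    omega
  rw [artin, artin, hchain]
  group

theorem commute_artin_of_commute_gen {g : Braid n} {i j : ℕ} (hij : i < j)
    (hg : ∀ t, i ≤ t → t < j → Commute g (gen n t)) : Commute g (artin n i j) := by
  obtain hij : i + 1 ≤ j := hij
  induction j, hij using Nat.le_induction with
  | base =>
    have hi := hg i le_rfl i.lt_succ_self
    rw [artin_succ_self]
    exact hi.mul_right hi
  | succ j hij ih =>
    have hj := hg j (by omega) j.lt_succ_self
    rw [artin_succ_right hij]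
    exact (hj.mul_right (ih fun t h1 h2 => hg t h1 (by omega))).mul_right hj.inv_right

theorem commute_gen_artin_of_lt {i j t : ℕ} (hij : i < j) (hjt : j < t) :
    Commute (gen n t) (artin n i j) :=
  commute_artin_of_commute_gen hij fun _ _ hm => (gen_commute (by omega)).symm

theorem commute_gen_artin_of_lt_of_add_two_le {i j t : ℕ} (hit : i < t) (htj : t + 2 ≤ j)
    (hj : j ≤ n) : Commute (gen n t) (artin n i j) := by
  induction j, htj using Nat.le_induction with
  | base =>
    have hgen : (gen n (t + 1) * gen n t) * gen n (t + 1) * (gen n (t + 1) * gen n t)⁻¹ =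
        gen n t := by
      rw [← gen_braid hj]; group
    have hartin : (gen n (t + 1) * gen n t) * artin n i t * (gen n (t + 1) * gen n t)⁻¹ =
        artin n i (t + 2) := by
      rw [artin_succ_right (by omega), artin_succ_right hit]; group
    rw [← hgen, ← hartin]
    exact (commute_gen_artin_of_lt hit t.lt_succ_self).conj _
  | succ j htj ih =>
    have hc : Commute (gen n t) (gen n j) := gen_commute htj
    rw [artin_succ_right (by omega)]
    exact (hc.mul_right (ih (by omega))).mul_right hc.inv_right

theorem gen_conj_artin_left {i j : ℕ} (hij : i + 2 ≤ j) (hj : j ≤ n) :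
    gen n i * artin n i j * (gen n i)⁻¹ = artin n (i + 1) j := by
  induction j, hij using Nat.le_induction with
  | base =>
    rw [artin_succ_right i.lt_succ_self, artin_succ_self, artin_succ_self,
      mul_sq_mul_inv_of_braid (gen_braid hj)]
    group
  | succ j hij ih =>
    have hc : Commute (gen n i) (gen n j) := gen_commute hij
    rw [artin_succ_right (by omega), artin_succ_right (by omega), ← ih (by omega)]
    calc gen n i * (gen n j * artin n i j * (gen n j)⁻¹) * (gen n i)⁻¹
        = (gen n i * gen n j) * artin n i j * (gen n i * gen n j)⁻¹ := by group
      _ = (gen n j * gen n i) * artin n i j * (gen n j * gen n i)⁻¹ := by rw [hc.eq]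
      _ = gen n j * (gen n i * artin n i j * (gen n i)⁻¹) * (gen n j)⁻¹ := by group

theorem commute_artin_artin_disjoint {a b c d : ℕ} (hab : a < b) (hbc : b < c) (hcd : c < d) :
    Commute (artin n a b) (artin n c d) :=
  commute_artin_of_commute_gen hcd fun _ ht _ => (commute_gen_artin_of_lt hab (by omega)).symm

theorem commute_artin_artin_nested {a b c d : ℕ} (hab : a < b) (hbc : b < c) (hcd : c < d)
    (hd : d ≤ n) : Commute (artin n a d) (artin n b c) :=
  commute_artin_of_commute_gen hbc fun _ ht htc =>
    (commute_gen_artin_of_lt_of_add_two_le (by omega) (by omega) hd).symm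

theorem artin_cyclicProd_succ {a c : ℕ} (hac : a + 2 ≤ c) (hc : c ≤ n) :
    CyclicProd (artin n a (a + 1)) (artin n a c) (artin n (a + 1) c) := by
  induction c, hac using Nat.le_induction with
  | base =>
    rw [artin_succ_right a.lt_succ_self, artin_succ_self, artin_succ_self]
    exact cyclicProd_of_braid (gen_braid hc)
  | succ c hac ih =>
    simpa only [MulAut.conj_apply,
      (commute_gen_artin_of_lt a.lt_succ_self (by omega : a + 1 < c)).mul_inv_cancel,
      ← artin_succ_right (by omega : a < c), ← artin_succ_right (by omega : a + 1 < c)]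
      using (ih (by omega)).map (MulAut.conj (gen n c))

theorem artin_cyclicProd {a b c : ℕ} (hab : a < b) (hbc : b < c) (hc : c ≤ n) :
    CyclicProd (artin n a b) (artin n a c) (artin n b c) := by
  obtain hab : a + 1 ≤ b := hab
  induction b, hab using Nat.le_induction with
  | base => exact artin_cyclicProd_succ (by omega) hc
  | succ b hab ih =>
    simpa only [MulAut.conj_apply, ← artin_succ_right (by omega : a < b),
      (commute_gen_artin_of_lt_of_add_two_le (by omega : a < b) (by omega) hc).mul_inv_cancel,
      gen_conj_artin_left (by omega : b + 2 ≤ c) hc]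
      using (ih (by omega)).map (MulAut.conj (gen n b))

theorem commute_artin_conj_artin_succ {a d : ℕ} (had : a + 3 ≤ d) (hd : d ≤ n) :
    Commute (artin n a (a + 1) * artin n a (a + 2) * (artin n a (a + 1))⁻¹)
      (artin n (a + 1) d) := by
  induction d, had using Nat.le_induction with
  | base =>
    have hsu : Commute (gen n a) (gen n (a + 2)) := gen_commute le_rfl
    have hsu2 : Commute (gen n a * gen n a) (gen n (a + 2) * gen n (a + 2)) :=
      (hsu.mul_right hsu).mul_left (hsu.mul_right hsu)
    rw [artin_succ_right a.lt_succ_self, artin_succ_right (a + 1).lt_succ_self, artin_succ_self,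
      artin_succ_self, sq_mul_sq_mul_inv_of_braid (gen_braid (by omega)),
      mul_sq_mul_inv_of_braid (gen_braid hd)]
    simpa only [inv_inv] using hsu2.conj (gen n (a + 1))⁻¹
  | succ d had ih =>
    simpa only [map_mul, map_inv, MulAut.conj_apply,
      (commute_gen_artin_of_lt a.lt_succ_self (by omega : a + 1 < d)).mul_inv_cancel,
      (commute_gen_artin_of_lt (by omega : a < a + 2) (by omega : a + 2 < d)).mul_inv_cancel,
      ← artin_succ_right (by omega : a + 1 < d)]
      using (ih (by omega)).map (MulAut.conj (gen n d))

theorem commute_artin_conj_artin {a b c d : ℕ} (hab : a < b) (hbc : b < c) (hcd : c < d)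
    (hd : d ≤ n) : Commute (artin n a b * artin n a c * (artin n a b)⁻¹) (artin n b d) := by
  have hsucc : ∀ c, a + 2 ≤ c → c < d →
      Commute (artin n a (a + 1) * artin n a c * (artin n a (a + 1))⁻¹) (artin n (a + 1) d) := by
    intro c hac
    induction c, hac using Nat.le_induction with
    | base => intro _; exact commute_artin_conj_artin_succ (by omega) hd
    | succ c hac ih =>
      intro hcd
      simpa only [map_mul, map_inv, MulAut.conj_apply,
        (commute_gen_artin_of_lt a.lt_succ_self (by omega : a + 1 < c)).mul_inv_cancel,
        ← artin_succ_right (by omega : a < c),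
        (commute_gen_artin_of_lt_of_add_two_le (by omega : a + 1 < c) (by omega) hd).mul_inv_cancel]
        using (ih (by omega)).map (MulAut.conj (gen n c))
  obtain hab : a + 1 ≤ b := hab
  induction b, hab using Nat.le_induction with
  | base => exact hsucc c (by omega) hcd
  | succ b hab ih =>
    simpa only [map_mul, map_inv, MulAut.conj_apply, ← artin_succ_right (by omega : a < b),
      (commute_gen_artin_of_lt_of_add_two_le (by omega : a < b) (by omega : b + 2 ≤ c)
        (hcd.le.trans hd)).mul_inv_cancel,
      gen_conj_artin_left (by omega : b + 2 ≤ d) hd]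
      using (ih (by omega)).map (MulAut.conj (gen n b))

end Artin

theorem statement_3_general (n N : ℕ) :
    ∀ i j k : ℕ, 1 ≤ i → i < j → j < k → k ≤ n → ∀ α : ℤ,
      Commute ((uu (xg n i j) (N : ℤ) (-α))⁻¹ * XX n N i) (xg n j k α) ∧
      Commute (uu (xg n i k) α (-(N : ℤ)) * XX n N k) (xg n i j α) ∧
      Commute (uu (xg n i j) (α + 1) (-(N : ℤ)) * XX n N j) (xg n i k α) := by
  intro i j k hi hij hjk hk α
  have hcyc_ij : CyclicProd (artin n 0 i) (artin n 0 j) (artin n i j) :=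
    artin_cyclicProd hi hij (by omega)
  have hcyc_ik : CyclicProd (artin n 0 i) (artin n 0 k) (artin n i k) :=
    artin_cyclicProd hi (hij.trans hjk) hk
  refine ⟨?_, ?_, ?_⟩
  · rw [XX, hcyc_ij.uu_inv_mul_pow (x := xg n i j) rfl]
    exact ((commute_artin_artin_disjoint hi hij hjk).pow_left N).zpow_conj _ α
  · rw [XX, hcyc_ik.uu_mul_pow (x := xg n i k) rfl]
    exact ((commute_artin_artin_nested hi hij hjk hk).pow_left N).zpow_conj _ α
  · have hshift : ∀ A B : Braid n,
        A ^ (α + 1) * B ^ N * A ^ (-(α + 1)) = A ^ α * (A * B * A⁻¹) ^ N * A ^ (-α) := by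
      intro A B
      rw [conj_pow]
      group
    rw [XX, hcyc_ij.uu_mul_pow (x := xg n i j) rfl, hshift]
    exact ((commute_artin_conj_artin hi hij hjk hk).pow_left N).zpow_conj _ α

/-- Relations in `P_{n+1}` (stated in `B_{n+1}`, of which `P_{n+1}` is a subgroup):
`u_{ij}(N,−α)⁻¹ X_{0i}` commutes with `x_{jk}(α)`, `u_{ik}(α,−N) X_{0k}` commutes with
`x_{ij}(α)`, and `u_{ij}(α+1,−N) X_{0j}` commutes with `x_{ik}(α)`. -/
theorem statement_3 (n N : ℕ) (hn : 3 ≤ n) (hN : 1 ≤ N) :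
    ∀ i j k : ℕ, 1 ≤ i → i < j → j < k → k ≤ n → ∀ α : ℤ,
      Commute ((uu (xg n i j) (N : ℤ) (-α))⁻¹ * XX n N i) (xg n j k α) ∧
      Commute (uu (xg n i k) α (-(N : ℤ)) * XX n N k) (xg n i j α) ∧
      Commute (uu (xg n i j) (α + 1) (-(N : ℤ)) * XX n N j) (xg n i k α) :=
  statement_3_general n N
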